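/- Fix integers n, m ≥ 1 and, in (Fin n × Fin m) → F₂, let row_l := ∑_{j} e_{(l,j)} denote the indicator vector of block l, let C_Z := span{row_l | l ∈ Fin n}, and let W := span{row_l + row_{l+1} | l ∈ Fin (n−1)}. Then {b ∈ C_Z | ∃ x' ∈ row_0 + W, ∀ i ∈ supp(x'), b i = 1} = C_Z \ {0}; consequently this set has cardinality 2^n − 1, and the loss-free logical Bell-measurement efficiency of QPC(n,m) with only ZZ=1 Bell measurements equals 1 − 2^{−n}. -/
import Mathlib


/-- Indicator vector of block `l` (the sum of standard basis vectors over the block),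
i.e. `row_l = ∑_j e_(l,j)`. -/
def rowInd (n m : ℕ) (l : Fin n) : (Fin n × Fin m) → ZMod 2 :=
  fun p => if p.1 = l then 1 else 0

/-- Support of a vector over F₂. -/
def suppF2 {ι : Type*} (v : ι → ZMod 2) : Set ι := {i | v i = 1}

/-- The span of the block indicators: the possible ZZ-outcome strings of QPC(n,m). -/
def CZqpc (n m : ℕ) : Submodule (ZMod 2) ((Fin n × Fin m) → ZMod 2) :=
  Submodule.span (ZMod 2) (Set.range (rowInd n m))

/-- The span of the X-stabilizer supports `row_l + row_{l+1}`. -/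
def Wqpc (n m : ℕ) : Submodule (ZMod 2) ((Fin (n + 1) × Fin m) → ZMod 2) :=
  Submodule.span (ZMod 2)
    (Set.range fun l : Fin n =>
      rowInd (n + 1) m l.castSucc + rowInd (n + 1) m l.succ)

/-- The set of ZZ-outcome strings for which the logical Bell state is identified:
some manifestation `x' ∈ row_0 + W` of the logical X̄ has `supp(x') ⊆ {i | b i = 1}`. -/
def qpcSuccess (n m : ℕ) : Set ((Fin (n + 1) × Fin (m + 1)) → ZMod 2) :=
  {b | b ∈ CZqpc (n + 1) (m + 1) ∧
    ∃ x' : (Fin (n + 1) × Fin (m + 1)) → ZMod 2,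
      x' - rowInd (n + 1) (m + 1) 0 ∈ Wqpc n (m + 1) ∧
      ∀ i, i ∈ suppF2 x' → b i = 1}

lemma rowInd_mem (n m : ℕ) (l : Fin n) : rowInd n m l ∈ CZqpc n m :=
  Submodule.subset_span ⟨l, rfl⟩

lemma sum_rowInd (n m : ℕ) (c : Fin n → ZMod 2) :
    (∑ l, c l • rowInd n m l) = fun p => c p.1 := by
  funext p
  simp [rowInd, Finset.sum_apply, mul_ite]

lemma mem_CZ_proj {n m : ℕ} {b : (Fin n × Fin (m+1)) → ZMod 2}
    (hb : b ∈ CZqpc n (m+1)) : ∀ p : Fin n × Fin (m+1), b p = b (p.1, 0) := by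
  induction hb using Submodule.span_induction with
  | mem x hx => obtain ⟨l, rfl⟩ := hx; intro p; rfl
  | zero => intro p; rfl
  | add x y _ _ hx hy => intro p; simp only [Pi.add_apply]; rw [hx p, hy p]
  | smul a x _ hx => intro p; simp only [Pi.smul_apply]; rw [hx p]

lemma not_row0_mem_W (n m : ℕ) : rowInd (n+1) (m+1) 0 ∉ Wqpc n (m+1) := by
  intro h
  have key : ∀ v ∈ Wqpc n (m+1), ∑ l : Fin (n+1), v (l, 0) = 0 := by
    intro v hv
    induction hv using Submodule.span_induction with
    | mem x hx =>
        obtain ⟨c, rfl⟩ := hx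
        simp [rowInd, Finset.sum_add_distrib]
        decide
    | zero => simp
    | add x y _ _ hx hy => simp [Finset.sum_add_distrib, hx, hy]
    | smul a x _ hx =>
        simp only [Pi.smul_apply, smul_eq_mul]
        rw [← Finset.mul_sum, hx, mul_zero]
  have h1 := key _ h
  simp [rowInd] at h1

lemma rowInd_sub_row0_mem_W (n m : ℕ) (l : Fin (n+1)) :
    rowInd (n+1) m l - rowInd (n+1) m 0 ∈ Wqpc n m := by
  have hsub : ∀ a b : (Fin (n+1) × Fin m) → ZMod 2, a - b = a + b := by
    intro a b; funext p
    have : ∀ x y : ZMod 2, x - y = x + y := by decide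
    exact this _ _
  rw [hsub]
  obtain ⟨k, hk⟩ := l
  induction k with
  | zero =>
      have : (⟨0, hk⟩ : Fin (n+1)) = 0 := rfl
      rw [this]
      have : rowInd (n+1) m 0 + rowInd (n+1) m 0 = 0 := by
        funext p
        have : ∀ x : ZMod 2, x + x = 0 := by decide
        exact this _
      rw [this]; exact (Wqpc n m).zero_mem
  | succ k ih =>
      have hk' : k < n + 1 := Nat.lt_of_succ_lt hk
      have hkn : k < n := Nat.lt_of_succ_lt_succ hk
      have hgen : rowInd (n+1) m ⟨k, hk'⟩ + rowInd (n+1) m ⟨k+1, hk⟩ ∈ Wqpc n m := by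
        apply Submodule.subset_span
        exact ⟨⟨k, hkn⟩, rfl⟩
      have key : ∀ x y z : ZMod 2, y + z = (x + y) + (x + z) := by decide
      have heq : rowInd (n+1) m ⟨k+1, hk⟩ + rowInd (n+1) m 0
          = (rowInd (n+1) m ⟨k, hk'⟩ + rowInd (n+1) m ⟨k+1, hk⟩)
            + (rowInd (n+1) m ⟨k, hk'⟩ + rowInd (n+1) m 0) := by
        funext p; exact key _ _ _
      rw [heq]
      exact add_mem hgen (ih hk')

noncomputable def czEquiv (n m : ℕ) :
    (CZqpc (n+1) (m+1) : Type _) ≃ (Fin (n+1) → ZMod 2) where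
  toFun b := fun l => b.1 (l, 0)
  invFun c := ⟨fun p => c p.1, by
    rw [← sum_rowInd]
    exact Submodule.sum_mem _ fun l _ => Submodule.smul_mem _ _ (rowInd_mem _ _ l)⟩
  left_inv b := Subtype.ext (funext fun p => (mem_CZ_proj b.2 p).symm)
  right_inv c := rfl

/-- With only ZZ=1 Bell measurements the successful outcome strings of QPC(n,m) are
exactly the nonzero codewords of C_Z, there are 2^n − 1 of them, and the loss-free
logical Bell-measurement efficiency equals 1 − 2^{−n} (stated for n+1, m+1 ≥ 1). -/
theorem qpc_zz1_efficiency (n m : ℕ) :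
    qpcSuccess n m = (CZqpc (n + 1) (m + 1) : Set ((Fin (n + 1) × Fin (m + 1)) → ZMod 2)) \ {0} ∧
    Nat.card (qpcSuccess n m) = 2 ^ (n + 1) - 1 ∧
    (Nat.card (qpcSuccess n m) : ℝ) / (Nat.card (CZqpc (n + 1) (m + 1)) : ℝ)
      = 1 - (2 : ℝ) ^ (-((n : ℤ) + 1)) := by
  have hset : qpcSuccess n m
      = (CZqpc (n + 1) (m + 1) : Set ((Fin (n + 1) × Fin (m + 1)) → ZMod 2)) \ {0} := by
    ext b
    constructor
    · rintro ⟨hb, x', hxW, hsupp⟩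
      refine ⟨hb, ?_⟩
      intro hb0
      have hb0' : b = 0 := hb0
      have hx0 : x' = 0 := by
        funext i
        by_contra hxi
        have hxi1 : x' i = 1 := by
          have : ∀ a : ZMod 2, a ≠ 0 → a = 1 := by decide
          exact this _ hxi
        have := hsupp i hxi1
        rw [hb0'] at this
        simp at this
      rw [hx0, zero_sub] at hxW
      exact not_row0_mem_W n m (by simpa using (Wqpc n (m+1)).neg_mem hxW)
    · rintro ⟨hb, hb0⟩
      refine ⟨hb, ?_⟩
      have hb0' : b ≠ 0 := hb0
      obtain ⟨p, hp⟩ : ∃ p, b p ≠ 0 := by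
        by_contra hall
        push_neg at hall
        exact hb0' (funext fun p => hall p)
      have hp1 : b (p.1, 0) = 1 := by
        have h1 : ∀ a : ZMod 2, a ≠ 0 → a = 1 := by decide
        rw [← mem_CZ_proj hb p]
        exact h1 _ hp
      refine ⟨rowInd (n+1) (m+1) p.1, rowInd_sub_row0_mem_W n (m+1) p.1, ?_⟩
      intro i hi
      have hi1 : i.1 = p.1 := by
        by_contra hne
        simp [suppF2, rowInd, hne] at hi
      rw [mem_CZ_proj hb i, hi1, hp1]
  refine ⟨hset, ?_⟩
  have hczcard : Nat.card (CZqpc (n+1) (m+1)) = 2 ^ (n + 1) := by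
    rw [Nat.card_congr (czEquiv n m)]
    simp [Nat.card_eq_fintype_card]
  have hcard : Nat.card (qpcSuccess n m) = 2 ^ (n + 1) - 1 := by
    rw [hset]
    rw [Nat.card_coe_set_eq, Set.ncard_diff_singleton_of_mem (Submodule.zero_mem _)]
    rw [← Nat.card_coe_set_eq]
    have : Nat.card (CZqpc (n+1) (m+1) : Set ((Fin (n + 1) × Fin (m + 1)) → ZMod 2))
        = Nat.card (CZqpc (n+1) (m+1)) := rfl
    rw [this, hczcard]
  refine ⟨hcard, ?_⟩
  rw [hcard, hczcard]
  have h1 : (1:ℕ) ≤ 2 ^ (n+1) := Nat.one_le_two_pow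
  have h2 : ((2:ℝ)) ^ (-((n : ℤ) + 1)) = ((2:ℝ) ^ (n+1))⁻¹ := by
    rw [← zpow_natCast (2:ℝ) (n+1)]
    rw [← zpow_neg]
    norm_num
  rw [h2]
  push_cast [h1]
  have hpos : (0:ℝ) < 2 ^ (n+1) := by positivity
  field_simp
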